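/- arXiv:0806.2086 — 2 statements merged into one kernel-verified Lean document; each statement's English description precedes it below -/
import Mathlib

section
/- Let d ∈ ℕ and let u₁, u₂ : (0,∞) × ℝ^d → (0,∞) be smooth functions each satisfying the heat inequality ∂ₜ u_j ≥ (1/(4π)) Δ u_j pointwise on (0,∞) × ℝ^d. Then the harmonic sum u : (0,∞) × ℝ^d → (0,∞), defined pointwise by 1/u = 1/u₁ + 1/u₂, also satisfies ∂ₜ u ≥ (1/(4π)) Δ u pointwise on (0,∞) × ℝ^d. -/
open MeasureTheory Real Set
open scoped ENNReal NNReal RealInnerProductSpace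

noncomputable section

/-- Euclidean space `ℝ^d`. -/
abbrev Euc (d : ℕ) := EuclideanSpace ℝ (Fin d)

/-- The spatial Laplacian of `f : ℝ^d → ℝ`. -/
def lap {d : ℕ} (f : Euc d → ℝ) (x : Euc d) : ℝ :=
  ∑ i : Fin d,
    fderiv ℝ (fun y => fderiv ℝ f y (EuclideanSpace.single i 1)) x (EuclideanSpace.single i 1)

/-- The divergence of a vector field on `ℝ^d`. -/
def div' {d : ℕ} (F : Euc d → Euc d) (x : Euc d) : ℝ :=
  ∑ i : Fin d, fderiv ℝ (fun y => F y i) x (EuclideanSpace.single i 1)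

/-- Convolution of two scalar functions on `ℝ^d`. -/
def conv {d : ℕ} (f g : Euc d → ℝ) (x : Euc d) : ℝ := ∫ y, f (x - y) * g y

/-- Convolution, vector-valued on the left. -/
def convVS {d : ℕ} (F : Euc d → Euc d) (g : Euc d → ℝ) (x : Euc d) : Euc d :=
  ∫ y, g y • F (x - y)

/-- Convolution, vector-valued on the right. -/
def convSV {d : ℕ} (f : Euc d → ℝ) (G : Euc d → Euc d) (x : Euc d) : Euc d :=
  ∫ y, f (x - y) • G y

/-- Convolution of two vector fields using the inner product. -/
def convVV {d : ℕ} (F G : Euc d → Euc d) (x : Euc d) : ℝ :=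
  ∫ y, inner ℝ (F (x - y)) (G y)

/-- `v` is rapidly decreasing in space, locally uniformly in time `t > 0`. -/
def RD {d : ℕ} (v : ℝ → Euc d → ℝ) : Prop :=
  ∀ K : Set ℝ, IsCompact K → K ⊆ Ioi (0 : ℝ) → ∀ N : ℕ, ∃ C : ℝ,
    ∀ t ∈ K, ∀ x : Euc d, (1 + ‖x‖) ^ N * |v t x| ≤ C

/-- Vector-valued version of `RD`. -/
def RDvec {d : ℕ} (v : ℝ → Euc d → Euc d) : Prop :=
  ∀ K : Set ℝ, IsCompact K → K ⊆ Ioi (0 : ℝ) → ∀ N : ℕ, ∃ C : ℝ,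
    ∀ t ∈ K, ∀ x : Euc d, (1 + ‖x‖) ^ N * ‖v t x‖ ≤ C

/-- The `L^q` (quasi-)norm, `0 < q < ∞`. -/
def Lnorm {d : ℕ} (q : ℝ) (f : Euc d → ℝ) : ℝ := (∫ x, |f x| ^ q) ^ (1 / q)

/-- The heat kernel `H_s(x) = s^{-d/2} e^{-π|x|²/s}`. -/
def heatK (d : ℕ) (s : ℝ) (x : Euc d) : ℝ :=
  s ^ (-(d : ℝ) / 2) * Real.exp (-π * ‖x‖ ^ 2 / s)

/-- The constant `C_r = (r^{1/r}/|r'|^{1/r'})^{1/2}`, where `1/r + 1/r' = 1` (and `C_1 = 1`). -/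
def Cc (r : ℝ) : ℝ :=
  if r = 1 then 1
  else (r ^ (1 / r) / |r / (r - 1)| ^ (1 / (r / (r - 1)))) ^ ((1 : ℝ) / 2)

/-- The five regularity (rapid decay) conditions on `u^a` from the paper. -/
def GoodReg {d : ℕ} (a : ℝ) (u : ℝ → Euc d → ℝ) : Prop :=
  RD (fun t x => u t x ^ a) ∧
  RD (fun t x => deriv (fun s => u s x ^ a) t) ∧
  RDvec (fun t x => gradient (fun y => u t y ^ a) x) ∧
  RD (fun t x => u t x ^ a * ‖gradient (fun y => Real.log (u t y)) x‖ ^ 2) ∧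
  RD (fun t x => lap (fun y => u t y ^ a) x)

/-- Iterated convolution of a list of functions. -/
def convList {d : ℕ} : List (Euc d → ℝ) → Euc d → ℝ
  | [] => fun _ => 0
  | [f] => f
  | f :: g :: fs => conv f (convList (g :: fs))



/-- Auxiliary: harmonic sum pointwise formula. -/
lemma harm_eq_aux {a b c : ℝ} (ha : 0 < a) (hb : 0 < b) (h : c⁻¹ = a⁻¹ + b⁻¹) :
    c = a * b / (a + b) := by
  have hc : c = (a⁻¹ + b⁻¹)⁻¹ := by rw [← h, inv_inv]
  rw [hc, inv_add_inv (ne_of_gt ha) (ne_of_gt hb), inv_div]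

lemma first_dir_aux {d : ℕ} (f g : Euc d → ℝ) (hf : ContDiff ℝ (⊤ : ℕ∞) f) (hg : ContDiff ℝ (⊤ : ℕ∞) g)
    (hne : ∀ y, f y + g y ≠ 0) (y : Euc d) (e : Euc d) :
    fderiv ℝ (fun z => f z * g z / (f z + g z)) y e =
      (g y * g y * fderiv ℝ f y e + f y * f y * fderiv ℝ g y e)
        * ((f y + g y) * (f y + g y))⁻¹ := by
  have hf' : HasFDerivAt f (fderiv ℝ f y) y := (hf.differentiable (by simp) y).hasFDerivAt
  have hg' : HasFDerivAt g (fderiv ℝ g y) y := (hg.differentiable (by simp) y).hasFDerivAt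
  have hs : HasFDerivAt (fun z => f z + g z) (fderiv ℝ f y + fderiv ℝ g y) y := hf'.add hg'
  have hm : HasFDerivAt (fun z => f z * g z)
      (f y • fderiv ℝ g y + g y • fderiv ℝ f y) y := hf'.mul hg'
  have hinv : HasDerivAt (fun w : ℝ => w⁻¹) (-((f y + g y) ^ 2)⁻¹) (f y + g y) :=
    hasDerivAt_inv (hne y)
  have hcomp : HasFDerivAt (fun z => (f z + g z)⁻¹)
      ((-((f y + g y) ^ 2)⁻¹) • (fderiv ℝ f y + fderiv ℝ g y)) y :=
    hinv.comp_hasFDerivAt y hs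
  have htot := hm.mul hcomp
  have heq : fderiv ℝ (fun z => f z * g z / (f z + g z)) y =
      fderiv ℝ (fun z => f z * g z * (f z + g z)⁻¹) y := by
    simp only [div_eq_mul_inv]
  rw [heq, show (fun z => f z * g z * (f z + g z)⁻¹) = ((fun z => f z * g z) * fun z => (f z + g z)⁻¹) from rfl, htot.fderiv]
  simp only [ContinuousLinearMap.add_apply, ContinuousLinearMap.smul_apply, smul_eq_mul]
  generalize (fderiv ℝ f y) e = p
  generalize (fderiv ℝ g y) e = q
  have hab := hne y
  field_simp
  ring

lemma second_dir_aux {d : ℕ} (f g : Euc d → ℝ) (hf : ContDiff ℝ (⊤ : ℕ∞) f) (hg : ContDiff ℝ (⊤ : ℕ∞) g)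
    (hne : ∀ y, f y + g y ≠ 0) (x : Euc d) (e : Euc d) :
    fderiv ℝ (fun y => fderiv ℝ (fun z => f z * g z / (f z + g z)) y e) x e =
      ((g x) ^ 2 * fderiv ℝ (fun y => fderiv ℝ f y e) x e
        + (f x) ^ 2 * fderiv ℝ (fun y => fderiv ℝ g y e) x e) / (f x + g x) ^ 2
      - 2 * (g x * fderiv ℝ f x e - f x * fderiv ℝ g x e) ^ 2 / (f x + g x) ^ 3 := by
  set P : Euc d → ℝ := fun y => fderiv ℝ f y e with hPdef
  set Q : Euc d → ℝ := fun y => fderiv ℝ g y e with hQdef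
  have hP : ContDiff ℝ (⊤ : ℕ∞) P := (hf.fderiv_right (by simp)).clm_apply contDiff_const
  have hQ : ContDiff ℝ (⊤ : ℕ∞) Q := (hg.fderiv_right (by simp)).clm_apply contDiff_const
  have hfun : (fun y => fderiv ℝ (fun z => f z * g z / (f z + g z)) y e)
      = fun y => (g y * g y * P y + f y * f y * Q y) * ((f y + g y) * (f y + g y))⁻¹ :=
    funext fun y => first_dir_aux f g hf hg hne y e
  rw [hfun]
  have hf' : HasFDerivAt f (fderiv ℝ f x) x := (hf.differentiable (by simp) x).hasFDerivAt
  have hg' : HasFDerivAt g (fderiv ℝ g x) x := (hg.differentiable (by simp) x).hasFDerivAt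
  have hP' : HasFDerivAt P (fderiv ℝ P x) x := (hP.differentiable (by simp) x).hasFDerivAt
  have hQ' : HasFDerivAt Q (fderiv ℝ Q x) x := (hQ.differentiable (by simp) x).hasFDerivAt
  have hN : HasFDerivAt (fun y => g y * g y * P y + f y * f y * Q y)
      (((g x * g x) • fderiv ℝ P x + P x • (g x • fderiv ℝ g x + g x • fderiv ℝ g x))
        + ((f x * f x) • fderiv ℝ Q x + Q x • (f x • fderiv ℝ f x + f x • fderiv ℝ f x))) x :=
    ((hg'.mul hg').mul hP').add ((hf'.mul hf').mul hQ')
  have hs : HasFDerivAt (fun z => f z + g z) (fderiv ℝ f x + fderiv ℝ g x) x := hf'.add hg'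
  have hD : HasFDerivAt (fun y => (f y + g y) * (f y + g y))
      ((f x + g x) • (fderiv ℝ f x + fderiv ℝ g x)
        + (f x + g x) • (fderiv ℝ f x + fderiv ℝ g x)) x := hs.mul hs
  have hDne : (f x + g x) * (f x + g x) ≠ 0 := mul_ne_zero (hne x) (hne x)
  have hinv : HasDerivAt (fun w : ℝ => w⁻¹) (-(((f x + g x) * (f x + g x)) ^ 2)⁻¹)
      ((f x + g x) * (f x + g x)) := hasDerivAt_inv hDne
  have hDinv : HasFDerivAt (fun y => ((f y + g y) * (f y + g y))⁻¹)
      ((-(((f x + g x) * (f x + g x)) ^ 2)⁻¹) •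
        ((f x + g x) • (fderiv ℝ f x + fderiv ℝ g x)
          + (f x + g x) • (fderiv ℝ f x + fderiv ℝ g x))) x :=
    hinv.comp_hasFDerivAt x hD
  have htot := hN.mul hDinv
  rw [show (fun y => (g y * g y * P y + f y * f y * Q y) * ((f y + g y) * (f y + g y))⁻¹) = ((fun y => g y * g y * P y + f y * f y * Q y) * fun y => ((f y + g y) * (f y + g y))⁻¹) from rfl, htot.fderiv]
  simp only [ContinuousLinearMap.add_apply, ContinuousLinearMap.smul_apply, smul_eq_mul]
  have hpe : (fderiv ℝ P x) e = fderiv ℝ (fun y => fderiv ℝ f y e) x e := rfl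
  have hqe : (fderiv ℝ Q x) e = fderiv ℝ (fun y => fderiv ℝ g y e) x e := rfl
  rw [hpe, hqe]
  have hPx : P x = fderiv ℝ f x e := rfl
  have hQx : Q x = fderiv ℝ g x e := rfl
  rw [hPx, hQx]
  generalize (fderiv ℝ f x) e = p
  generalize (fderiv ℝ g x) e = q
  generalize fderiv ℝ (fun y => fderiv ℝ f y e) x e = p'
  generalize fderiv ℝ (fun y => fderiv ℝ g y e) x e = q'
  have hab := hne x
  field_simp
  ring

lemma lap_harm_aux {d : ℕ} (f g : Euc d → ℝ) (hf : ContDiff ℝ (⊤ : ℕ∞) f) (hg : ContDiff ℝ (⊤ : ℕ∞) g)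
    (hne : ∀ y, f y + g y ≠ 0) (x : Euc d) :
    lap (fun y => f y * g y / (f y + g y)) x =
      ((g x) ^ 2 * lap f x + (f x) ^ 2 * lap g x) / (f x + g x) ^ 2
      - 2 * (∑ i : Fin d,
          (g x * fderiv ℝ f x (EuclideanSpace.single i 1)
            - f x * fderiv ℝ g x (EuclideanSpace.single i 1)) ^ 2) / (f x + g x) ^ 3 := by
  simp only [lap]
  rw [Finset.sum_congr rfl (fun i _ => second_dir_aux f g hf hg hne x (EuclideanSpace.single i 1))]
  rw [Finset.sum_sub_distrib, ← Finset.sum_div, ← Finset.sum_div, Finset.sum_add_distrib,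
    ← Finset.mul_sum, ← Finset.mul_sum, ← Finset.mul_sum]

/-- If `u₁, u₂ > 0` are smooth solutions of the heat inequality
`∂ₜ u ≥ (1/(4π)) Δ u` on `(0,∞) × ℝ^d`, then so is their harmonic sum `u`,
defined by `1/u = 1/u₁ + 1/u₂`. -/
theorem statement1 (d : ℕ) (hd : 0 < d)
    (u₁ u₂ : ℝ → Euc d → ℝ)
    (hpos₁ : ∀ t > (0 : ℝ), ∀ x, 0 < u₁ t x)
    (hpos₂ : ∀ t > (0 : ℝ), ∀ x, 0 < u₂ t x)
    (hsm₁ : ContDiffOn ℝ (⊤ : ℕ∞) (fun q : ℝ × Euc d => u₁ q.1 q.2) (Ioi 0 ×ˢ univ))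
    (hsm₂ : ContDiffOn ℝ (⊤ : ℕ∞) (fun q : ℝ × Euc d => u₂ q.1 q.2) (Ioi 0 ×ˢ univ))
    (hheat₁ : ∀ t > (0 : ℝ), ∀ x, 1 / (4 * π) * lap (fun y => u₁ t y) x ≤ deriv (fun s => u₁ s x) t)
    (hheat₂ : ∀ t > (0 : ℝ), ∀ x, 1 / (4 * π) * lap (fun y => u₂ t y) x ≤ deriv (fun s => u₂ s x) t)
    (u : ℝ → Euc d → ℝ)
    (hu : ∀ t x, (u t x)⁻¹ = (u₁ t x)⁻¹ + (u₂ t x)⁻¹)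
    (hupos : ∀ t > (0 : ℝ), ∀ x, 0 < u t x) :
    ∀ t > (0 : ℝ), ∀ x, 1 / (4 * π) * lap (fun y => u t y) x ≤ deriv (fun s => u s x) t := by
  intro t ht x
  have hc : (0 : ℝ) < 1 / (4 * π) := by positivity
  -- spatial slices are smooth
  have hmem : ∀ x' : Euc d, (Ioi (0:ℝ) ×ˢ (univ : Set (Euc d))) ∈ nhds (t, x') := fun x' =>
    (isOpen_Ioi.prod isOpen_univ).mem_nhds ⟨ht, mem_univ _⟩
  have hf : ContDiff ℝ (⊤ : ℕ∞) (fun y => u₁ t y) := by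
    rw [contDiff_iff_contDiffAt]
    intro y
    exact (hsm₁.contDiffAt (hmem y)).comp y (ContDiffAt.prodMk contDiffAt_const contDiffAt_id)
  have hg : ContDiff ℝ (⊤ : ℕ∞) (fun y => u₂ t y) := by
    rw [contDiff_iff_contDiffAt]
    intro y
    exact (hsm₂.contDiffAt (hmem y)).comp y (ContDiffAt.prodMk contDiffAt_const contDiffAt_id)
  have hne : ∀ y, u₁ t y + u₂ t y ≠ 0 := fun y =>
    ne_of_gt (add_pos (hpos₁ t ht y) (hpos₂ t ht y))
  -- function equality in space
  have hueq : (fun y => u t y) = fun y => u₁ t y * u₂ t y / (u₁ t y + u₂ t y) :=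
    funext fun y => harm_eq_aux (hpos₁ t ht y) (hpos₂ t ht y) (hu t y)
  rw [hueq, lap_harm_aux (fun y => u₁ t y) (fun y => u₂ t y) hf hg hne x]
  -- time derivative
  have hFd : DifferentiableAt ℝ (fun s => u₁ s x) t := by
    have := ((hsm₁.contDiffAt (hmem x)).comp t (ContDiffAt.prodMk contDiffAt_id contDiffAt_const))
    exact this.differentiableAt (by simp)
  have hGd : DifferentiableAt ℝ (fun s => u₂ s x) t := by
    have := ((hsm₂.contDiffAt (hmem x)).comp t (ContDiffAt.prodMk contDiffAt_id contDiffAt_const))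
    exact this.differentiableAt (by simp)
  have hF : HasDerivAt (fun s => u₁ s x) (deriv (fun s => u₁ s x) t) t := hFd.hasDerivAt
  have hG : HasDerivAt (fun s => u₂ s x) (deriv (fun s => u₂ s x) t) t := hGd.hasDerivAt
  have hev : (fun s => u s x) =ᶠ[nhds t] fun s => u₁ s x * u₂ s x / (u₁ s x + u₂ s x) := by
    filter_upwards [Ioi_mem_nhds ht] with s hs
    exact harm_eq_aux (hpos₁ s hs x) (hpos₂ s hs x) (hu s x)
  have hdiv := (hF.mul hG).div (hF.add hG) (hne x)
  have hder : deriv (fun s => u s x) t =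
      (((deriv (fun s => u₁ s x) t) * u₂ t x + u₁ t x * (deriv (fun s => u₂ s x) t))
          * (u₁ t x + u₂ t x)
        - u₁ t x * u₂ t x * ((deriv (fun s => u₁ s x) t) + (deriv (fun s => u₂ s x) t)))
        / (u₁ t x + u₂ t x) ^ 2 := by
    rw [hev.deriv_eq]
    exact hdiv.deriv
  rw [hder]
  -- final inequality
  set a := u₁ t x with hadef
  set b := u₂ t x with hbdef
  set A := lap (fun y => u₁ t y) x
  set B := lap (fun y => u₂ t y) x
  set F' := deriv (fun s => u₁ s x) t
  set G' := deriv (fun s => u₂ s x) t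
  set S := ∑ i : Fin d,
      (b * fderiv ℝ (fun y => u₁ t y) x (EuclideanSpace.single i 1)
        - a * fderiv ℝ (fun y => u₂ t y) x (EuclideanSpace.single i 1)) ^ 2 with hSdef
  have hS : 0 ≤ S := Finset.sum_nonneg fun i _ => sq_nonneg _
  have ha : 0 < a := hpos₁ t ht x
  have hb : 0 < b := hpos₂ t ht x
  have hab : 0 < a + b := add_pos ha hb
  have h1 : 1 / (4 * π) * A ≤ F' := hheat₁ t ht x
  have h2 : 1 / (4 * π) * B ≤ G' := hheat₂ t ht x
  have key : 1 / (4 * π) * (b ^ 2 * A + a ^ 2 * B) ≤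
      (F' * b + a * G') * (a + b) - a * b * (F' + G') := by
    nlinarith [mul_le_mul_of_nonneg_left h1 (sq_nonneg b),
      mul_le_mul_of_nonneg_left h2 (sq_nonneg a)]
  have step1 : 1 / (4 * π) *
      ((b ^ 2 * A + a ^ 2 * B) / (a + b) ^ 2 - 2 * S / (a + b) ^ 3) ≤
      1 / (4 * π) * ((b ^ 2 * A + a ^ 2 * B) / (a + b) ^ 2) := by
    apply mul_le_mul_of_nonneg_left _ (le_of_lt hc)
    have : 0 ≤ 2 * S / (a + b) ^ 3 := by positivity
    linarith
  refine le_trans step1 ?_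
  rw [mul_div_assoc' (1 / (4 * π)), div_le_div_iff₀ (by positivity) (by positivity)]
  nlinarith [key, sq_nonneg (a + b), pow_pos hab 2]

end
end

section
/- Let d ∈ ℕ, let 0 < p₁, p₂, p < ∞ satisfy 1/p₁ + 1/p₂ = 1 + 1/p, and let 0 < σ₁, σ₂ < ∞ satisfy (1/p₁)(1 − 1/p₁)σ₂ = (1/p₂)(1 − 1/p₂)σ₁. Then with H_s(x) := s^{−d/2} e^{−π|x|²/s} for s > 0, one has ‖H_{σ₁}^{1/p₁} * H_{σ₂}^{1/p₂}‖_{L^p(ℝ^d)} = (C_{p₁} C_{p₂} / C_p)^d, where C_r := (r^{1/r} / r′^{1/r′})^{1/2} and r′ is the conjugate exponent, 1/r + 1/r′ = 1. -/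
/-!
Each power `H_σ^{1/q}` is a constant multiple of the Gaussian `x ↦ exp(-π (1/(qσ)) |x|²)`.
Gaussians are closed under convolution (complete the square) and their `L^p` norms are
explicit, so the norm in question is the `d/2`-th power of a one-dimensional constant.
In terms of the widths `a = α/σ₁`, `b = β/σ₂` (`α = 1/p₁`, `β = 1/p₂`) the condition on
`σ₁, σ₂` reads `a (1 - α) = b (1 - β)`, i.e. `(1 - α, 1 - β) = κ (b, a)` for some `κ`.
Then the part of that constant depending on `a, b` collapses to
`|1-α|^{1-α} |1-β|^{1-β} / |2-α-β|^{2-α-β}`, which is what `(C_{p₁} C_{p₂} / C_p)²` contains.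
-/

open MeasureTheory Real Set
open scoped ENNReal NNReal RealInnerProductSpace

noncomputable section

def gauss {d : ℕ} (c : ℝ) (x : Euc d) : ℝ := rexp (-(π * c) * ‖x‖ ^ 2)

lemma integral_gauss {d : ℕ} {c : ℝ} (hc : 0 < c) :
    ∫ x : Euc d, gauss c x = c⁻¹ ^ ((d : ℝ) / 2) := by
  unfold gauss
  rw [GaussianFourier.integral_rexp_neg_mul_sq_norm (by positivity), finrank_euclideanSpace_fin,
    div_mul_cancel_left₀ pi_ne_zero]

lemma gauss_sub_mul_gauss {d : ℕ} {a b : ℝ} (hab : 0 < a + b) (x y : Euc d) :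
    gauss a (x - y) * gauss b y
      = gauss (a + b) (y - (a / (a + b)) • x) * gauss (a * b / (a + b)) x := by
  simp only [gauss, ← exp_add]
  congr 1
  rw [norm_sub_sq_real, norm_sub_sq_real, real_inner_smul_right, norm_smul, norm_eq_abs,
    mul_pow, sq_abs, real_inner_comm]
  field_simp
  ring

lemma conv_gauss {d : ℕ} {a b : ℝ} (ha : 0 < a) (hb : 0 < b) (x : Euc d) :
    conv (gauss a) (gauss b) x = (a + b)⁻¹ ^ ((d : ℝ) / 2) * gauss (a * b / (a + b)) x := by
  have hab : 0 < a + b := add_pos ha hb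
  simp only [conv, gauss_sub_mul_gauss hab, integral_mul_const,
    integral_sub_right_eq_self (gauss (a + b)), integral_gauss hab]

lemma conv_const_mul {d : ℕ} (C₁ C₂ : ℝ) (f g : Euc d → ℝ) (x : Euc d) :
    conv (fun y => C₁ * f y) (fun y => C₂ * g y) x = C₁ * C₂ * conv f g x := by
  simp only [conv, ← integral_const_mul]
  congr 1 with y
  ring

lemma Lnorm_const_mul_gauss {d : ℕ} {C k p : ℝ} (hC : 0 < C) (hk : 0 < k) (hp : 0 < p) :
    Lnorm p (fun x : Euc d => C * gauss k x)
      = C * ((1 / p / k) ^ (1 / p)) ^ ((d : ℝ) / 2) := by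
  have hpow : ∀ x : Euc d, |C * gauss k x| ^ p = C ^ p * gauss (k * p) x := fun x => by
    rw [abs_of_pos (by unfold gauss; positivity), gauss, gauss, mul_rpow hC.le (exp_nonneg _),
      ← exp_mul]
    ring_nf
  rw [Lnorm, funext hpow, integral_const_mul, integral_gauss (by positivity),
    mul_rpow (by positivity) (by positivity), ← rpow_mul hC.le, mul_one_div_cancel hp.ne',
    rpow_one, ← rpow_mul (by positivity), ← rpow_mul (by positivity), mul_comm (_ / 2)]
  congr 2
  field_simp

lemma heatK_rpow {d : ℕ} {σ : ℝ} (hσ : 0 < σ) (α : ℝ) (x : Euc d) :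
    heatK d σ x ^ α = (σ ^ (-α)) ^ ((d : ℝ) / 2) * gauss (α / σ) x := by
  rw [heatK, mul_rpow (by positivity) (exp_nonneg _), ← rpow_mul hσ.le, ← rpow_mul hσ.le, gauss,
    ← exp_mul]
  congr 2
  · ring
  · field_simp

lemma Cc_pos {r : ℝ} (hr : 0 < r) : 0 < Cc r := by
  unfold Cc
  split_ifs with hr1
  · exact one_pos
  · have : r / (r - 1) ≠ 0 := div_ne_zero hr.ne' (sub_ne_zero.2 hr1)
    positivity

-- At `r = 1` the right side is `1 ^ (-1) * 0 ^ 0 = 1`, matching the convention `C_1 = 1`.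
lemma Cc_sq {r : ℝ} (hr : 0 < r) :
    Cc r ^ 2 = (1 / r) ^ (-(1 / r)) * |1 - 1 / r| ^ (1 - 1 / r) := by
  by_cases hr1 : r = 1
  · simp [Cc, hr1]
  have hconj : 1 / (r / (r - 1)) = 1 - 1 / r := by field_simp
  have habs : |r / (r - 1)| = |1 - 1 / r|⁻¹ := by
    rw [← hconj, one_div, abs_inv, inv_inv]
  rw [Cc, if_neg hr1, hconj, habs, inv_rpow (abs_nonneg _), div_inv_eq_mul, one_div r,
    inv_rpow hr.le, ← rpow_neg hr.le, neg_neg, ← rpow_natCast, ← rpow_mul (by positivity)]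
  norm_num

lemma rpow_mul_rpow_div_rpow_add_eq_abs {a b u v : ℝ} (ha : 0 < a) (hb : 0 < b)
    (h : a * u = b * v) :
    a ^ v * b ^ u / (a + b) ^ (u + v) = |u| ^ u * |v| ^ v / |u + v| ^ (u + v) := by
  by_cases hu : u = 0
  · obtain rfl : v = 0 := by
      subst hu
      nlinarith
    simp [hu]
  obtain ⟨κ, rfl⟩ : ∃ κ, u = κ * b := ⟨u / b, by field_simp⟩
  obtain rfl : v = κ * a := mul_left_cancel₀ hb.ne' (by linarith)
  have hκ : 0 < |κ| := abs_pos.mpr (left_ne_zero_of_mul hu)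
  rw [← mul_add, add_comm b, abs_mul, abs_mul, abs_mul, abs_of_pos ha, abs_of_pos hb,
    abs_of_pos (add_pos ha hb), mul_rpow hκ.le hb.le, mul_rpow hκ.le ha.le,
    mul_rpow hκ.le (add_pos ha hb).le, mul_add κ a b, rpow_add hκ]
  field_simp

lemma heatK_conv_constant_eq_Cc_sq {α β γ σ₁ σ₂ : ℝ} (hα : 0 < α) (hβ : 0 < β) (hγ : 0 < γ)
    (hσ₁ : 0 < σ₁) (hσ₂ : 0 < σ₂) (hsum : α + β = 1 + γ)
    (hBL : α * (1 - α) * σ₂ = β * (1 - β) * σ₁) :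
    σ₁ ^ (-α) * σ₂ ^ (-β) * (α / σ₁ + β / σ₂)⁻¹
        * (γ / (α / σ₁ * (β / σ₂) / (α / σ₁ + β / σ₂))) ^ γ
      = (Cc (1 / α) * Cc (1 / β) / Cc (1 / γ)) ^ 2 := by
  obtain ⟨a, ha, rfl⟩ : ∃ a, 0 < a ∧ σ₁ = α / a := ⟨α / σ₁, by positivity, by field_simp⟩
  obtain ⟨b, hb, rfl⟩ : ∃ b, 0 < b ∧ σ₂ = β / b := ⟨β / σ₂, by positivity, by field_simp⟩
  have hab : a * (1 - α) = b * (1 - β) := by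
    field_simp at hBL
    linarith
  have hsplit : (α / a) ^ (-α) * (β / b) ^ (-β) * (a + b)⁻¹ * (γ / (a * b / (a + b))) ^ γ
      = α ^ (-α) * β ^ (-β) * γ ^ γ
        * (a ^ (1 - β) * b ^ (1 - α) / (a + b) ^ ((1 - α) + (1 - β))) := by
    apply log_injOn_pos (Set.mem_Ioi.2 (by positivity)) (Set.mem_Ioi.2 (by positivity))
    simp (disch := positivity) only [log_mul, log_div, log_rpow, log_inv]
    linear_combination (log a + log b - log (a + b)) * hsum
  rw [div_div_cancel₀ hα.ne', div_div_cancel₀ hβ.ne', hsplit,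
    rpow_mul_rpow_div_rpow_add_eq_abs ha hb hab, div_pow, mul_pow, Cc_sq (by positivity),
    Cc_sq (by positivity), Cc_sq (by positivity), one_div_one_div, one_div_one_div,
    one_div_one_div, show 1 - γ = (1 - α) + (1 - β) by linarith, rpow_neg hγ.le]
  field_simp

theorem statement14_general (d : ℕ) (p₁ p₂ p σ₁ σ₂ : ℝ)
    (hp₁ : 0 < p₁) (hp₂ : 0 < p₂) (hp : 0 < p)
    (hscal : 1 / p₁ + 1 / p₂ = 1 + 1 / p)
    (hσ₁ : 0 < σ₁) (hσ₂ : 0 < σ₂)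
    (hBL : 1 / p₁ * (1 - 1 / p₁) * σ₂ = 1 / p₂ * (1 - 1 / p₂) * σ₁) :
    Lnorm p (conv (fun x => heatK d σ₁ x ^ (1 / p₁)) (fun x => heatK d σ₂ x ^ (1 / p₂)))
      = (Cc p₁ * Cc p₂ / Cc p) ^ d := by
  have ha : 0 < 1 / p₁ / σ₁ := by positivity
  have hb : 0 < 1 / p₂ / σ₂ := by positivity
  have hconv : conv (fun x => heatK d σ₁ x ^ (1 / p₁)) (fun x => heatK d σ₂ x ^ (1 / p₂))
      = fun x => (σ₁ ^ (-(1 / p₁))) ^ ((d : ℝ) / 2) * (σ₂ ^ (-(1 / p₂))) ^ ((d : ℝ) / 2)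
          * (1 / p₁ / σ₁ + 1 / p₂ / σ₂)⁻¹ ^ ((d : ℝ) / 2)
          * gauss (1 / p₁ / σ₁ * (1 / p₂ / σ₂) / (1 / p₁ / σ₁ + 1 / p₂ / σ₂)) x := by
    funext x
    simp only [heatK_rpow hσ₁, heatK_rpow hσ₂, conv_const_mul, conv_gauss ha hb]
    ring
  have hconst := heatK_conv_constant_eq_Cc_sq (by positivity) (by positivity) (by positivity)
    hσ₁ hσ₂ hscal hBL
  rw [one_div_one_div, one_div_one_div, one_div_one_div] at hconst
  have hC : 0 < Cc p₁ * Cc p₂ / Cc p := div_pos (mul_pos (Cc_pos hp₁) (Cc_pos hp₂)) (Cc_pos hp)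
  rw [hconv, Lnorm_const_mul_gauss (by positivity) (by positivity) hp,
    ← mul_rpow (by positivity) (by positivity), ← mul_rpow (by positivity) (by positivity),
    ← mul_rpow (by positivity) (by positivity), hconst, ← rpow_natCast, ← rpow_natCast,
    ← rpow_mul hC.le]
  congr 1
  ring

/-- With `1/p₁ + 1/p₂ = 1 + 1/p` and `σ₁, σ₂ > 0` satisfying
`(1/p₁)(1-1/p₁)σ₂ = (1/p₂)(1-1/p₂)σ₁`, the heat kernels `H_s(x) = s^{-d/2} e^{-π|x|²/s}`
satisfy `‖H_{σ₁}^{1/p₁} * H_{σ₂}^{1/p₂}‖_{L^p(ℝ^d)} = (C_{p₁} C_{p₂} / C_p)^d`. -/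
theorem statement14 (d : ℕ) (hd : 0 < d) (p₁ p₂ p σ₁ σ₂ : ℝ)
    (hp₁ : 0 < p₁) (hp₂ : 0 < p₂) (hp : 0 < p)
    (hscal : 1 / p₁ + 1 / p₂ = 1 + 1 / p)
    (hσ₁ : 0 < σ₁) (hσ₂ : 0 < σ₂)
    (hBL : 1 / p₁ * (1 - 1 / p₁) * σ₂ = 1 / p₂ * (1 - 1 / p₂) * σ₁) :
    Lnorm p (conv (fun x => heatK d σ₁ x ^ (1 / p₁)) (fun x => heatK d σ₂ x ^ (1 / p₂)))
      = (Cc p₁ * Cc p₂ / Cc p) ^ d :=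
  statement14_general d p₁ p₂ p σ₁ σ₂ hp₁ hp₂ hp hscal hσ₁ hσ₂ hBL

end
end
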